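/- Let I be a subnilpotent (abelian group)-valued k-functor and D a discrete (abelian group)-valued k-functor. Then Ext^1(I, D) = 0: every exact sequence 0 → D → L →^π I → 0 of (abelian group)-valued k-functors splits by a morphism σ : I → L of (abelian group)-valued k-functors with π ∘ σ = id. -/

import Mathlib

universe u

open TensorProduct

/-- An (abelian group)-valued `k`-functor: a functor from commutative `k`-algebras
(in universe `u`) to abelian groups. -/
structure AbFunctor (k : Type u) [Field k] : Type (u + 1) where
  obj : ∀ (B : Type u) [CommRing B] [Algebra k B], Type u
  [grp : ∀ (B : Type u) [CommRing B] [Algebra k B], AddCommGroup (obj B)]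
  map : ∀ {B C : Type u} [CommRing B] [Algebra k B] [CommRing C] [Algebra k C],
    (B →ₐ[k] C) → (obj B →+ obj C)
  map_id : ∀ (B : Type u) [CommRing B] [Algebra k B],
    map (AlgHom.id k B) = AddMonoidHom.id (obj B)
  map_comp : ∀ {B C D : Type u} [CommRing B] [Algebra k B] [CommRing C] [Algebra k C]
    [CommRing D] [Algebra k D] (f : B →ₐ[k] C) (g : C →ₐ[k] D),
    map (g.comp f) = (map g).comp (map f)

attribute [instance] AbFunctor.grp

variable (k : Type u) [Field k]

/-- A morphism of (abelian group)-valued `k`-functors. -/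
structure AbHom (F G : AbFunctor k) where
  app : ∀ (B : Type u) [CommRing B] [Algebra k B], F.obj B →+ G.obj B
  naturality : ∀ {B C : Type u} [CommRing B] [Algebra k B] [CommRing C] [Algebra k C]
    (f : B →ₐ[k] C) (x : F.obj B), G.map f (app B x) = app C (F.map f x)

/-- A natural transformation of the underlying set-valued functors
(not required to be additive). -/
structure SetHom (F G : AbFunctor k) where
  app : ∀ (B : Type u) [CommRing B] [Algebra k B], F.obj B → G.obj B
  naturality : ∀ {B C : Type u} [CommRing B] [Algebra k B] [CommRing C] [Algebra k C]
    (f : B →ₐ[k] C) (x : F.obj B), G.map f (app B x) = app C (F.map f x)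

/-- An isomorphism of (abelian group)-valued `k`-functors. -/
structure AbIso (F G : AbFunctor k) where
  hom : AbHom k F G
  inv : AbHom k G F
  hom_inv : ∀ (B : Type u) [CommRing B] [Algebra k B] (x : F.obj B),
    inv.app B (hom.app B x) = x
  inv_hom : ∀ (B : Type u) [CommRing B] [Algebra k B] (x : G.obj B),
    hom.app B (inv.app B x) = x
/-- The constant sheaf associated to an abelian group `M`:
`B ↦` locally constant functions `Spec B → M`. -/
noncomputable def ConstFunctor (M : Type u) [AddCommGroup M] : AbFunctor k where
  obj B _ _ := LocallyConstant (PrimeSpectrum B) M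
  grp B _ _ := inferInstance
  map {B C} _ _ _ _ f :=
    { toFun := LocallyConstant.comap ⟨PrimeSpectrum.comap f.toRingHom, PrimeSpectrum.continuous_comap _⟩
      map_zero' := by ext x; simp
      map_add' := by intro g h; ext x; simp }
  map_id B _ _ := by
    ext g x
    simp
  map_comp f g := by
    ext h x
    rfl
/-- `0 → F' → F → F'' → 0` is a short exact sequence of (abelian group)-valued
`k`-functors (exactness is objectwise). -/
structure IsShortExact {F' F F'' : AbFunctor k} (i : AbHom k F' F)
    (p : AbHom k F F'') : Prop where
  inj : ∀ (B : Type u) [CommRing B] [Algebra k B], Function.Injective (i.app B)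
  surj : ∀ (B : Type u) [CommRing B] [Algebra k B], Function.Surjective (p.app B)
  exact : ∀ (B : Type u) [CommRing B] [Algebra k B] (x : F.obj B),
    p.app B x = 0 ↔ x ∈ Set.range (i.app B)
section TensorIncl

variable {B C : Type u} [CommRing B] [Algebra k B] [CommRing C] [Algebra k C]
  [Algebra B C] [IsScalarTower k B C]

/-- `c ↦ c ⊗ 1 : C → C ⊗_B C`, as a `k`-algebra homomorphism. -/
noncomputable def tensorIncl₁ : C →ₐ[k] C ⊗[B] C :=
  Algebra.TensorProduct.includeLeft

/-- `c ↦ 1 ⊗ c : C → C ⊗_B C`, as a `k`-algebra homomorphism. -/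
noncomputable def tensorIncl₂ : C →ₐ[k] C ⊗[B] C :=
  (Algebra.TensorProduct.includeRight (R := B) (A := C) (B := C)).restrictScalars k

end TensorIncl

/-- A functor is a sheaf for the fpqc topology if for every faithfully flat
homomorphism `B → C` of commutative `k`-algebras, `F(B)` is exactly the equalizer of
the two maps `F(C) ⇉ F(C ⊗_B C)` induced by `c ↦ c ⊗ 1` and `c ↦ 1 ⊗ c`. -/
def IsFpqcSheaf (F : AbFunctor k) : Prop :=
  ∀ (B C : Type u) [CommRing B] [Algebra k B] [CommRing C] [Algebra k C]
    [Algebra B C] [IsScalarTower k B C], Module.FaithfullyFlat B C →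
    Function.Injective (F.map (IsScalarTower.toAlgHom k B C)) ∧
    Set.range (F.map (IsScalarTower.toAlgHom k B C)) =
      { x : F.obj C |
        F.map (tensorIncl₁ k (B := B) (C := C)) x
          = F.map (tensorIncl₂ k (B := B) (C := C)) x }
/-- A functor is nilpotent if it is an fpqc sheaf which vanishes on all reduced
`k`-algebras. -/
def IsNilpotentFunctor (F : AbFunctor k) : Prop :=
  IsFpqcSheaf k F ∧
    ∀ (B : Type u) [CommRing B] [Algebra k B], IsReduced B → ∀ x : F.obj B, x = 0

/-- A functor is subnilpotent if it embeds as a subfunctor of a nilpotent functor. -/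
def IsSubnilpotent (F : AbFunctor k) : Prop :=
  ∃ (N : AbFunctor k) (j : AbHom k F N), IsNilpotentFunctor k N ∧
    ∀ (B : Type u) [CommRing B] [Algebra k B], Function.Injective (j.app B)
/-- A functor is discrete if it is isomorphic to the constant sheaf associated to
some abelian group. -/
def IsDiscreteFunctor (F : AbFunctor k) : Prop :=
  ∃ M : AddCommGrpCat.{u}, Nonempty (AbIso k F (ConstFunctor k M))


/-! Every extension of a subnilpotent functor `I` by a discrete functor `D` splits because `D`
admits a natural retraction. Over `B_red = B ⧸ nilradical B` the functor `I` vanishes, so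
`j : D(B_red) → L(B_red)` is an isomorphism; and `D(B) → D(B_red)` is an isomorphism since
`Spec B_red → Spec B` is a homeomorphism. Hence
`ρ_B : L(B) → L(B_red) ≅ D(B_red) ≅ D(B)` is natural with `ρ ∘ j = 1`, and `1 - j ∘ ρ`
descends along `π` to a section. -/

open Function

variable {k}

namespace AbHom

variable {F G H : AbFunctor k}

def id (F : AbFunctor k) : AbHom k F F where
  app _ _ _ := AddMonoidHom.id _
  naturality _ _ := rfl

def comp (g : AbHom k G H) (f : AbHom k F G) : AbHom k F H where
  app B _ _ := (g.app B).comp (f.app B)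
  naturality φ x := by simp only [AddMonoidHom.comp_apply, naturality]

def sub (f g : AbHom k F G) : AbHom k F G where
  app B _ _ := f.app B - g.app B
  naturality φ x := by simp only [AddMonoidHom.sub_apply, map_sub, naturality]

noncomputable def invOfBijective (f : AbHom k F G)
    (hf : ∀ (B : Type u) [CommRing B] [Algebra k B], Bijective (f.app B)) : AbHom k G F where
  app B _ _ := (AddEquiv.ofBijective (f.app B) (hf B)).symm.toAddMonoidHom
  naturality φ y := (hf _).injective <| by
    simp only [AddEquiv.coe_toAddMonoidHom, ← naturality, AddEquiv.ofBijective_apply_symm_apply]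

lemma invOfBijective_app_apply (f : AbHom k F G)
    (hf : ∀ (B : Type u) [CommRing B] [Algebra k B], Bijective (f.app B))
    (B : Type u) [CommRing B] [Algebra k B] (x : F.obj B) :
    (f.invOfBijective hf).app B (f.app B x) = x :=
  (AddEquiv.ofBijective (f.app B) (hf B)).symm_apply_apply x

section Desc

variable (p : AbHom k F G) (hp : ∀ (B : Type u) [CommRing B] [Algebra k B], Surjective (p.app B))
  (f : AbHom k F H) (hf : ∀ (B : Type u) [CommRing B] [Algebra k B] (x : F.obj B),
    p.app B x = 0 → f.app B x = 0)
include hf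

lemma app_eq_of_app_eq {B : Type u} [CommRing B] [Algebra k B] {x x' : F.obj B}
    (h : p.app B x = p.app B x') : f.app B x = f.app B x' :=
  sub_eq_zero.mp <| by rw [← map_sub]; exact hf B _ (by rw [map_sub, h, sub_self])

include hp

noncomputable def descOfSurjective : AbHom k G H where
  app B _ _ := AddMonoidHom.mk' (fun y => f.app B (surjInv (hp B) y)) fun y y' => by
    rw [← map_add]
    exact app_eq_of_app_eq p f hf <| by simp only [map_add, surjInv_eq]
  naturality φ y := by
    simp only [AddMonoidHom.mk'_apply, naturality]
    exact app_eq_of_app_eq p f hf <| by simp only [← naturality, surjInv_eq]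

lemma descOfSurjective_app_apply (B : Type u) [CommRing B] [Algebra k B] (x : F.obj B) :
    (p.descOfSurjective hp f hf).app B (p.app B x) = f.app B x :=
  app_eq_of_app_eq p f hf (surjInv_eq (hp B) _)

end Desc

end AbHom

namespace IsShortExact

variable {D L I : AbFunctor k} {j : AbHom k D L} {p : AbHom k L I}

theorem exists_section_of_retraction (hex : IsShortExact k j p) (ρ : AbHom k L D)
    (hρ : ∀ (B : Type u) [CommRing B] [Algebra k B] (d : D.obj B), ρ.app B (j.app B d) = d) :
    ∃ σ : AbHom k I L, ∀ (B : Type u) [CommRing B] [Algebra k B] (x : I.obj B),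
      p.app B (σ.app B x) = x := by
  have hτ : ∀ (B : Type u) [CommRing B] [Algebra k B] (y : L.obj B),
      p.app B y = 0 → ((AbHom.id L).sub (j.comp ρ)).app B y = 0 := by
    intro B _ _ y hy
    obtain ⟨d, rfl⟩ := (hex.exact B y).mp hy
    exact sub_eq_zero.mpr (congrArg (j.app B) (hρ B d)).symm
  refine ⟨p.descOfSurjective hex.surj _ hτ, fun B _ _ x => ?_⟩
  obtain ⟨y, rfl⟩ := hex.surj B x
  have hpj : p.app B (j.app B (ρ.app B y)) = 0 := (hex.exact B _).mpr ⟨_, rfl⟩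
  rw [AbHom.descOfSurjective_app_apply]
  show p.app B (y - j.app B (ρ.app B y)) = p.app B y
  rw [map_sub, hpj, sub_zero]

lemma bijective_of_subsingleton (hex : IsShortExact k j p) (B : Type u) [CommRing B]
    [Algebra k B] [Subsingleton (I.obj B)] : Bijective (j.app B) :=
  ⟨hex.inj B, fun y => (hex.exact B y).mp (Subsingleton.elim _ _)⟩

end IsShortExact

section Reduction

variable {R B C E : Type*} [CommRing R] [CommRing B] [Algebra R B] [CommRing C] [Algebra R C]
  [CommRing E] [Algebra R E]

noncomputable def AlgHom.quotientNilradicalMap (f : B →ₐ[R] C) :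
    B ⧸ nilradical B →ₐ[R] C ⧸ nilradical C :=
  Ideal.quotientMapₐ _ f fun _ hb => mem_nilradical.mpr ((mem_nilradical.mp hb).map f)

lemma AlgHom.quotientNilradicalMap_comp_mkₐ (f : B →ₐ[R] C) :
    f.quotientNilradicalMap.comp (Ideal.Quotient.mkₐ R (nilradical B)) =
      (Ideal.Quotient.mkₐ R (nilradical C)).comp f :=
  rfl

lemma AlgHom.quotientNilradicalMap_id :
    (AlgHom.id R B).quotientNilradicalMap = AlgHom.id R (B ⧸ nilradical B) :=
  Ideal.Quotient.algHom_ext _ rfl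

lemma AlgHom.quotientNilradicalMap_comp (f : B →ₐ[R] C) (g : C →ₐ[R] E) :
    (g.comp f).quotientNilradicalMap = g.quotientNilradicalMap.comp f.quotientNilradicalMap :=
  Ideal.Quotient.algHom_ext _ rfl

instance isReduced_quotient_nilradical : IsReduced (B ⧸ nilradical B) :=
  (Ideal.isRadical_iff_quotient_reduced _).mp (Ideal.radical_isRadical ⊥)

end Reduction

noncomputable def AbFunctor.reduced (F : AbFunctor k) : AbFunctor k where
  obj B _ _ := F.obj (B ⧸ nilradical B)
  map f := F.map f.quotientNilradicalMap
  map_id B _ _ := by rw [AlgHom.quotientNilradicalMap_id, F.map_id]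
  map_comp f g := by rw [AlgHom.quotientNilradicalMap_comp, F.map_comp]

noncomputable def AbFunctor.toReduced (F : AbFunctor k) : AbHom k F F.reduced where
  app B _ _ := F.map (Ideal.Quotient.mkₐ k (nilradical B))
  naturality f x := by
    change (F.map _).comp (F.map _) x = (F.map _).comp (F.map _) x
    rw [← F.map_comp, ← F.map_comp, AlgHom.quotientNilradicalMap_comp_mkₐ]

noncomputable def AbHom.reduced {F G : AbFunctor k} (f : AbHom k F G) :
    AbHom k F.reduced G.reduced where
  app B _ _ := f.app (B ⧸ nilradical B)
  naturality φ x := f.naturality φ.quotientNilradicalMap x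

lemma AbHom.toReduced_naturality {F G : AbFunctor k} (f : AbHom k F G)
    (B : Type u) [CommRing B] [Algebra k B] (x : F.obj B) :
    G.toReduced.app B (f.app B x) = f.reduced.app B (F.toReduced.app B x) :=
  f.naturality _ x

theorem IsShortExact.exists_retraction {D L I : AbFunctor k} {j : AbHom k D L}
    {p : AbHom k L I} (hex : IsShortExact k j p)
    (hI : ∀ (B : Type u) [CommRing B] [Algebra k B], Subsingleton (I.obj (B ⧸ nilradical B)))
    (hD : ∀ (B : Type u) [CommRing B] [Algebra k B], Bijective (D.toReduced.app B)) :
    ∃ ρ : AbHom k L D, ∀ (B : Type u) [CommRing B] [Algebra k B] (d : D.obj B),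
      ρ.app B (j.app B d) = d := by
  have hj : ∀ (B : Type u) [CommRing B] [Algebra k B], Bijective (j.reduced.app B) :=
    fun B _ _ => hex.bijective_of_subsingleton (B ⧸ nilradical B)
  refine ⟨(D.toReduced.invOfBijective hD).comp ((j.reduced.invOfBijective hj).comp L.toReduced),
    fun B _ _ d => ?_⟩
  change (D.toReduced.invOfBijective hD).app B
    ((j.reduced.invOfBijective hj).app B (L.toReduced.app B (j.app B d))) = d
  rw [j.toReduced_naturality, AbHom.invOfBijective_app_apply, AbHom.invOfBijective_app_apply]

theorem IsSubnilpotent.subsingleton {F : AbFunctor k} (hF : IsSubnilpotent k F)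
    (B : Type u) [CommRing B] [Algebra k B] [IsReduced B] : Subsingleton (F.obj B) := by
  obtain ⟨N, i, ⟨-, hN⟩, hi⟩ := hF
  exact ⟨fun x y => hi B ((hN B ‹_› _).trans (hN B ‹_› _).symm)⟩

theorem AbIso.bijective_map {F G : AbFunctor k} (e : AbIso k F G) {B C : Type u}
    [CommRing B] [Algebra k B] [CommRing C] [Algebra k C] {f : B →ₐ[k] C}
    (hf : Bijective (G.map f)) : Bijective (F.map f) := by
  have hF : ⇑(F.map f) = e.inv.app C ∘ G.map f ∘ e.hom.app B := by
    funext x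
    rw [comp_apply, comp_apply, e.hom.naturality, e.hom_inv]
  have hinv : Bijective (e.inv.app C) :=
    bijective_iff_has_inverse.mpr ⟨_, e.inv_hom C, e.hom_inv C⟩
  have hhom : Bijective (e.hom.app B) :=
    bijective_iff_has_inverse.mpr ⟨_, e.hom_inv B, e.inv_hom B⟩
  rw [hF]
  exact hinv.comp (hf.comp hhom)

theorem ConstFunctor.bijective_map_of_isHomeomorph (M : Type u) [AddCommGroup M]
    {B C : Type u} [CommRing B] [Algebra k B] [CommRing C] [Algebra k C] (f : B →ₐ[k] C)
    (hf : IsHomeomorph (PrimeSpectrum.comap f.toRingHom)) :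
    Bijective ((ConstFunctor k M).map f) :=
  (LocallyConstant.congrLeft (Z := M) (hf.homeomorph _).symm).bijective

theorem IsDiscreteFunctor.bijective_toReduced_app {F : AbFunctor k} (hF : IsDiscreteFunctor k F)
    (B : Type u) [CommRing B] [Algebra k B] : Bijective (F.toReduced.app B) := by
  obtain ⟨M, ⟨e⟩⟩ := hF
  refine e.bijective_map (ConstFunctor.bijective_map_of_isHomeomorph M _ ?_)
  refine PrimeSpectrum.isHomeomorph_comap _ (fun x => ⟨1, one_pos, ?_⟩) ?_
  · simpa using Ideal.Quotient.mk_surjective x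
  · simp

/-- `Ext¹(I, D) = 0` for `I` subnilpotent and `D` discrete: every
extension `0 → D → L → I → 0` splits. -/
theorem ext_subnilpotent_discrete_vanishes {k : Type u} [Field k]
    {I D L : AbFunctor k} (hI : IsSubnilpotent k I) (hD : IsDiscreteFunctor k D)
    (j : AbHom k D L) (pi : AbHom k L I) (hex : IsShortExact k j pi) :
    ∃ σ : AbHom k I L, ∀ (B : Type u) [CommRing B] [Algebra k B] (x : I.obj B),
      pi.app B (σ.app B x) = x := by
  obtain ⟨ρ, hρ⟩ :=
    hex.exists_retraction (fun B _ _ => hI.subsingleton _) hD.bijective_toReduced_app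
  exact hex.exists_section_of_retraction ρ hρ
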